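/- arXiv:math/0403346 — 4 statements merged into one kernel-verified Lean document; each statement's English description precedes it below -/
import Mathlib

section
/- Let A be a bialgebra over k(q) and T = (t_{ij}) an n×n q-matrix in A whose entries satisfy Δ(t_{ij}) = ∑_{k=1}^n t_{ik} ⊗ t_{kj} and ε(t_{ij}) = δ_{ij}. Then the quantum determinant det_q(T) = ∑_{σ∈S_n} (-q)^{ℓ(σ)} t_{1,σ(1)}⋯t_{n,σ(n)} is a group-like element: Δ(det_q) = det_q ⊗ det_q and ε(det_q) = 1. -/
open scoped TensorProduct

set_option synthInstance.maxHeartbeats 1000000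
set_option maxHeartbeats 1000000


/-- The number of inversions (the length) of a permutation of `Fin n`. -/
def permLength {n : ℕ} (σ : Equiv.Perm (Fin n)) : ℕ :=
  ((Finset.univ : Finset (Fin n × Fin n)).filter
    (fun p => p.1 < p.2 ∧ σ p.2 < σ p.1)).card

/-- The quantum determinant `∑_σ (-q)^{ℓ(σ)} t_{0,σ(0)} ⋯ t_{n-1,σ(n-1)}`. -/
noncomputable def qDet {k : Type*} [Field k] {A : Type*} [Ring A] [Algebra (RatFunc k) A]
    (q : RatFunc k) {n : ℕ} (t : Fin n → Fin n → A) : A :=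
  ∑ σ : Equiv.Perm (Fin n),
    ((-q) ^ permLength σ) • (((List.finRange n).map (fun i => t i (σ i))).prod)

def funcLen {n : ℕ} (f : Fin n → Fin n) : ℕ :=
  ((Finset.univ : Finset (Fin n × Fin n)).filter
    (fun p => p.1 < p.2 ∧ f p.2 < f p.1)).card

lemma permLength_eq_funcLen {n : ℕ} (σ : Equiv.Perm (Fin n)) :
    permLength σ = funcLen ⇑σ := rfl

section adj
variable {n : ℕ} (i0 i1 : Fin n)

lemma i0_lt_i1 (h01 : (i0 : ℕ) + 1 = (i1 : ℕ)) : i0 < i1 := by rw [Fin.lt_def]; omega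

lemma swap_lt (h01 : (i0 : ℕ) + 1 = (i1 : ℕ)) {a b : Fin n} (hab : a < b)
    (hne : ¬(a = i0 ∧ b = i1)) :
    Equiv.swap i0 i1 a < Equiv.swap i0 i1 b := by
  rw [Equiv.swap_apply_def, Equiv.swap_apply_def]
  split_ifs <;> simp only [Fin.ext_iff, Fin.lt_def, not_and] at * <;> omega

lemma funcLen_comp_swap (h01 : (i0 : ℕ) + 1 = (i1 : ℕ)) (f : Fin n → Fin n)
    (hf : f i0 < f i1) :
    funcLen (f ∘ Equiv.swap i0 i1) = funcLen f + 1 := by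
  classical
  set s := Equiv.swap i0 i1 with hs
  have hss : ∀ x, s (s x) = x := fun x => Equiv.swap_apply_self i0 i1 x
  have hsl : s i0 = i1 := Equiv.swap_apply_left i0 i1
  have hsr : s i1 = i0 := Equiv.swap_apply_right i0 i1
  set Invf := ((Finset.univ : Finset (Fin n × Fin n)).filter
    (fun p => p.1 < p.2 ∧ f p.2 < f p.1)) with hInvf
  have hnotmem : (i0, i1) ∉ Invf := by
    simp only [hInvf, Finset.mem_filter, Finset.mem_univ, true_and, not_and]
    intro _; exact not_lt.mpr (le_of_lt hf)
  have hne_img : ∀ p : Fin n × Fin n, p.1 < p.2 → (s p.1, s p.2) ≠ (i0, i1) := by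
    intro p hplt hcon
    have h1 : p.1 = i1 := by
      have := congrArg s (congrArg Prod.fst hcon); simpa [hss, hsl] using this
    have h2' : p.2 = i0 := by
      have := congrArg s (congrArg Prod.snd hcon); simpa [hss, hsr] using this
    rw [h1, h2'] at hplt
    exact absurd hplt (not_lt.mpr (le_of_lt (i0_lt_i1 i0 i1 h01)))
  have hcard : funcLen (f ∘ ⇑s) = (insert (i0, i1) Invf).card := by
    apply Finset.card_nbij'
      (i := fun p => if p = (i0, i1) then p else (s p.1, s p.2))
      (j := fun p => if p = (i0, i1) then p else (s p.1, s p.2))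
    · intro p hp
      by_cases hcase : p = (i0, i1)
      · simp [hcase]
      · simp only [Finset.mem_coe, Finset.mem_filter, Finset.mem_univ, true_and] at hp
        have hne : ¬(p.1 = i0 ∧ p.2 = i1) := by
          intro ⟨h1, h2⟩; exact hcase (Prod.ext h1 h2)
        have hlt := swap_lt i0 i1 h01 hp.1 hne
        simp only [hcase, if_false]
        apply Finset.mem_insert_of_mem
        simp only [hInvf, Finset.mem_filter, Finset.mem_univ, true_and]
        exact ⟨hlt, by simpa [Function.comp, hss] using hp.2⟩
    · intro p hp
      rcases eq_or_ne p (i0, i1) with hcase | hcase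
      · simp only [hcase, if_pos rfl]
        simp only [Finset.mem_coe, Finset.mem_filter, Finset.mem_univ, true_and]
        refine ⟨i0_lt_i1 i0 i1 h01, ?_⟩
        simpa [Function.comp, hsl, hsr] using hf
      · have hp' : p ∈ Invf := (Finset.mem_insert.mp hp).resolve_left hcase
        simp only [hInvf, Finset.mem_filter, Finset.mem_univ, true_and] at hp'
        have hne : ¬(p.1 = i0 ∧ p.2 = i1) := by
          intro ⟨h1, h2⟩; exact hcase (Prod.ext h1 h2)
        have hlt := swap_lt i0 i1 h01 hp'.1 hne
        simp only [hcase, if_false, Finset.mem_coe, Finset.mem_filter, Finset.mem_univ, true_and]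
        refine ⟨hlt, ?_⟩
        simpa [Function.comp, hss] using hp'.2
    · intro p hp
      by_cases hcase : p = (i0, i1)
      · simp [hcase]
      · simp only [Finset.mem_coe, Finset.mem_filter, Finset.mem_univ, true_and] at hp
        have h2 := hne_img p hp.1
        simp [hcase, h2, hss]
    · intro p hp
      rcases eq_or_ne p (i0, i1) with hcase | hcase
      · simp [hcase]
      · have hp' : p ∈ Invf := (Finset.mem_insert.mp hp).resolve_left hcase
        simp only [hInvf, Finset.mem_filter, Finset.mem_univ, true_and] at hp'
        have h2 := hne_img p hp'.1
        simp [hcase, h2, hss]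
  rw [hcard, Finset.card_insert_of_notMem hnotmem]
  rfl

end adj

section lists
variable {n : ℕ} {M : Type*} [Monoid M]

lemma mem_take_finRange {j : Fin n} {m : ℕ} (hj : j ∈ (List.finRange n).take m) :
    (j : ℕ) < m := by
  obtain ⟨idx, hlen, heq⟩ := List.mem_iff_getElem.mp hj
  have h1 : idx < m := by
    have := hlen; simp [List.length_take, List.length_finRange] at this; omega
  rw [List.getElem_take, List.getElem_finRange] at heq
  rw [← heq]; simpa using h1

lemma mem_drop_finRange {j : Fin n} {m : ℕ} (hj : j ∈ (List.finRange n).drop m) :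
    m ≤ (j : ℕ) := by
  obtain ⟨idx, hlen, heq⟩ := List.mem_iff_getElem.mp hj
  rw [List.getElem_drop, List.getElem_finRange] at heq
  rw [← heq]; simp

lemma prod_split (i0 i1 : Fin n) (h01 : (i0 : ℕ) + 1 = (i1 : ℕ)) (g : Fin n → M) :
    ((List.finRange n).map g).prod =
      (((List.finRange n).take (i0 : ℕ)).map g).prod *
        (g i0 * (g i1 * (((List.finRange n).drop ((i0 : ℕ) + 2)).map g).prod)) := by
  have hi1 : (i0 : ℕ) + 1 < n := h01 ▸ i1.isLt
  have h0 : (i0 : ℕ) < (List.finRange n).length := by simpa using (by omega : (i0 : ℕ) < n)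
  have h1 : (i0 : ℕ) + 1 < (List.finRange n).length := by simpa using hi1
  conv_lhs => rw [← List.take_append_drop (i0 : ℕ) (List.finRange n)]
  rw [List.drop_eq_getElem_cons h0, List.drop_eq_getElem_cons h1]
  have e0 : (List.finRange n)[(i0 : ℕ)] = i0 := by
    rw [List.getElem_finRange]; exact Fin.ext (by simp)
  have e1 : (List.finRange n)[(i0 : ℕ) + 1] = i1 := by
    rw [List.getElem_finRange]; exact Fin.ext (by simp [h01])
  rw [e0, e1]
  simp [List.prod_append, mul_assoc]

lemma map_take_congr (i0 : Fin n) (g1 g2 : Fin n → M)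
    (hg : ∀ j : Fin n, (j : ℕ) < (i0 : ℕ) → g1 j = g2 j) :
    ((List.finRange n).take (i0 : ℕ)).map g1 = ((List.finRange n).take (i0 : ℕ)).map g2 :=
  List.map_congr_left fun j hj => hg j (mem_take_finRange hj)

lemma map_drop_congr (i0 : Fin n) (g1 g2 : Fin n → M)
    (hg : ∀ j : Fin n, (i0 : ℕ) + 2 ≤ (j : ℕ) → g1 j = g2 j) :
    ((List.finRange n).drop ((i0 : ℕ) + 2)).map g1
      = ((List.finRange n).drop ((i0 : ℕ) + 2)).map g2 :=
  List.map_congr_left fun j hj => hg j (mem_drop_finRange hj)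

end lists

section mono
variable {n m : ℕ}

lemma strictMono_of_adj {f : Fin n → Fin m}
    (h : ∀ i : ℕ, ∀ hi : i + 1 < n, f ⟨i, by omega⟩ < f ⟨i + 1, hi⟩) :
    StrictMono f := by
  have H : ∀ (j : ℕ) (hj : j < n) (a : Fin n), (a : ℕ) < j → f a < f ⟨j, hj⟩ := by
    intro j
    induction j with
    | zero => intro _ a ha; omega
    | succ p ih =>
      intro hj a ha
      rcases Nat.lt_or_ge (a : ℕ) p with h' | h'
      · exact lt_trans (ih (by omega) a h') (h p hj)
      · have hap : (a : ℕ) = p := by omega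
        have : a = ⟨p, by omega⟩ := Fin.ext hap
        rw [this]; exact h p hj
  intro a b hab
  have := H (b : ℕ) b.isLt a hab
  simpa using this
end mono

section alg
variable {k : Type*} [Field k] {A : Type*} [Ring A] [Algebra (RatFunc k) A] {n : ℕ}

lemma sum_perm_pair (i0 i1 : Fin n) (h01 : (i0 : ℕ) + 1 = (i1 : ℕ))
    {M : Type*} [AddCommMonoid M] (F : Equiv.Perm (Fin n) → M) :
    ∑ σ : Equiv.Perm (Fin n), F σ =
      ∑ σ ∈ Finset.univ.filter (fun σ : Equiv.Perm (Fin n) => σ i0 < σ i1),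
        (F σ + F (σ * Equiv.swap i0 i1)) := by
  classical
  have hne : i0 ≠ i1 := by intro h; rw [h] at h01; omega
  rw [Finset.sum_add_distrib]
  rw [← Finset.sum_filter_add_sum_filter_not Finset.univ
    (fun σ : Equiv.Perm (Fin n) => σ i0 < σ i1) F]
  congr 1
  apply Finset.sum_nbij' (i := fun σ => σ * Equiv.swap i0 i1)
    (j := fun σ => σ * Equiv.swap i0 i1)
  · intro σ hσ
    simp only [Finset.mem_filter, Finset.mem_univ, true_and] at *
    simp only [Equiv.Perm.mul_apply, Equiv.swap_apply_left, Equiv.swap_apply_right]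
    have : σ i1 ≠ σ i0 := fun h => hne.symm (σ.injective h)
    exact lt_of_le_of_ne (not_lt.mp hσ) this
  · intro σ hσ
    simp only [Finset.mem_filter, Finset.mem_univ, true_and, not_lt] at *
    simp only [Equiv.Perm.mul_apply, Equiv.swap_apply_left, Equiv.swap_apply_right]
    exact le_of_lt hσ
  · intro σ _; simp [mul_assoc]
  · intro σ _; simp [mul_assoc]
  · intro σ _; simp [mul_assoc]

/-- The generalized row-determinant. -/
noncomputable def Dq (q : RatFunc k) (t : Fin n → Fin n → A) (f : Fin n → Fin n) : A :=
  ∑ σ : Equiv.Perm (Fin n),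
    ((-q) ^ funcLen ⇑σ) • (((List.finRange n).map (fun j => t (f j) (σ j))).prod)

lemma term_decomp (i0 i1 : Fin n) (h01 : (i0 : ℕ) + 1 = (i1 : ℕ))
    (q : RatFunc k) (t : Fin n → Fin n → A) (g : Fin n → Fin n)
    (σ : Equiv.Perm (Fin n)) (hσ : σ i0 < σ i1) :
    ((-q) ^ funcLen ⇑σ) • (((List.finRange n).map (fun j => t (g j) (σ j))).prod)
      + ((-q) ^ funcLen ⇑(σ * Equiv.swap i0 i1)) •
          (((List.finRange n).map (fun j => t (g j) ((σ * Equiv.swap i0 i1) j))).prod)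
    = ((-q) ^ funcLen ⇑σ) •
        ((((List.finRange n).take (i0 : ℕ)).map (fun j => t (g j) (σ j))).prod *
            ((t (g i0) (σ i0) * t (g i1) (σ i1)) *
              (((List.finRange n).drop ((i0 : ℕ) + 2)).map (fun j => t (g j) (σ j))).prod)
          + (-q) •
            ((((List.finRange n).take (i0 : ℕ)).map (fun j => t (g j) (σ j))).prod *
              ((t (g i0) (σ i1) * t (g i1) (σ i0)) *
                (((List.finRange n).drop ((i0 : ℕ) + 2)).map
                  (fun j => t (g j) (σ j))).prod))) := by
  set s := Equiv.swap i0 i1 with hs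
  have hl : funcLen ⇑(σ * s) = funcLen ⇑σ + 1 := by
    have h2 : ⇑(σ * s) = ⇑σ ∘ ⇑s := rfl
    rw [h2, funcLen_comp_swap i0 i1 h01 ⇑σ hσ]
  have hsfix : ∀ j : Fin n, j ≠ i0 → j ≠ i1 → s j = j := fun j h0 h1 =>
    Equiv.swap_apply_of_ne_of_ne h0 h1
  have ht : ((List.finRange n).take (i0 : ℕ)).map (fun j => t (g j) ((σ * s) j))
      = ((List.finRange n).take (i0 : ℕ)).map (fun j => t (g j) (σ j)) := by
    apply map_take_congr
    intro j hj
    have h0 : j ≠ i0 := by intro h; rw [h] at hj; omega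
    have h1 : j ≠ i1 := by intro h; rw [h] at hj; omega
    simp [Equiv.Perm.mul_apply, hsfix j h0 h1]
  have hd : ((List.finRange n).drop ((i0 : ℕ) + 2)).map (fun j => t (g j) ((σ * s) j))
      = ((List.finRange n).drop ((i0 : ℕ) + 2)).map (fun j => t (g j) (σ j)) := by
    apply map_drop_congr
    intro j hj
    have h0 : j ≠ i0 := by intro h; rw [h] at hj; omega
    have h1 : j ≠ i1 := by intro h; rw [h] at hj; omega
    simp [Equiv.Perm.mul_apply, hsfix j h0 h1]
  rw [prod_split i0 i1 h01 (fun j => t (g j) (σ j)),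
    prod_split i0 i1 h01 (fun j => t (g j) ((σ * s) j)), ht, hd, hl]
  have hv0 : (σ * s) i0 = σ i1 := by simp [hs, Equiv.Perm.mul_apply]
  have hv1 : (σ * s) i1 = σ i0 := by simp [hs, Equiv.Perm.mul_apply]
  rw [hv0, hv1, pow_succ, mul_smul, smul_add]
  rw [mul_assoc, mul_assoc]

lemma Dq_adjEqual (i0 i1 : Fin n) (h01 : (i0 : ℕ) + 1 = (i1 : ℕ))
    (q : RatFunc k) (t : Fin n → Fin n → A)
    (hrow : ∀ i j l : Fin n, j < l → t i j * t i l = q • (t i l * t i j))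
    (f : Fin n → Fin n) (hf : f i0 = f i1) :
    Dq q t f = 0 := by
  rw [Dq, sum_perm_pair i0 i1 h01]
  apply Finset.sum_eq_zero
  intro σ hσ
  simp only [Finset.mem_filter, Finset.mem_univ, true_and] at hσ
  rw [term_decomp i0 i1 h01 q t f σ hσ]
  rw [← hf, hrow (f i0) (σ i0) (σ i1) hσ]
  rw [smul_mul_assoc, mul_smul_comm, ← add_smul]
  simp

lemma key_module (q : RatFunc k) (Y Z : A) (hq1 : q * q⁻¹ = 1) :
    Z = q • Y + ((-q) • ((q - q⁻¹) • Z + Y) + (q * q) • Z) := by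
  have c1 : (-q) * (q - q⁻¹) + q * q = 1 := by linear_combination hq1
  rw [smul_add, smul_smul, add_right_comm (((-q) * (q - q⁻¹)) • Z) ((-q) • Y),
    ← add_smul, c1, one_smul, neg_smul]
  abel

lemma key_lift (q : RatFunc k) (P Q U V : A) (hP : P = q • Q + ((-q) • U + (q * q) • V)) :
    P + (-q) • Q = (-q) • (U + (-q) • V) := by
  rw [hP, add_right_comm (q • Q) ((-q) • U + (q * q) • V) ((-q) • Q), ← add_smul,
    add_neg_cancel, zero_smul, zero_add, smul_add, smul_smul, neg_mul_neg]

lemma Dq_swap (i0 i1 : Fin n) (h01 : (i0 : ℕ) + 1 = (i1 : ℕ))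
    (q : RatFunc k) (hq1 : q * q⁻¹ = 1) (t : Fin n → Fin n → A)
    (hcross : ∀ i j l m : Fin n, i < j → l < m → t i m * t j l = t j l * t i m)
    (hmix : ∀ i j l m : Fin n, i < j → l < m →
      t i l * t j m - t j m * t i l = (q - q⁻¹) • (t i m * t j l))
    (f : Fin n → Fin n) (hf : f i0 < f i1) :
    Dq q t (f ∘ ⇑(Equiv.swap i0 i1)) = (-q) • Dq q t f := by
  set s := Equiv.swap i0 i1 with hs
  rw [Dq, Dq, sum_perm_pair i0 i1 h01, sum_perm_pair i0 i1 h01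
    (fun σ => ((-q) ^ funcLen ⇑σ) •
      (((List.finRange n).map (fun j => t (f j) (σ j))).prod)), Finset.smul_sum]
  apply Finset.sum_congr rfl
  intro σ hσ
  simp only [Finset.mem_filter, Finset.mem_univ, true_and] at hσ
  rw [term_decomp i0 i1 h01 q t (f ∘ ⇑s) σ hσ, term_decomp i0 i1 h01 q t f σ hσ]
  have hsfix : ∀ j : Fin n, j ≠ i0 → j ≠ i1 → s j = j := fun j h0 h1 =>
    Equiv.swap_apply_of_ne_of_ne h0 h1
  have ht : ((List.finRange n).take (i0 : ℕ)).map (fun j => t ((f ∘ ⇑s) j) (σ j))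
      = ((List.finRange n).take (i0 : ℕ)).map (fun j => t (f j) (σ j)) := by
    apply map_take_congr
    intro j hj
    have h0 : j ≠ i0 := by intro h; rw [h] at hj; omega
    have h1 : j ≠ i1 := by intro h; rw [h] at hj; omega
    simp [hsfix j h0 h1]
  have hd : ((List.finRange n).drop ((i0 : ℕ) + 2)).map (fun j => t ((f ∘ ⇑s) j) (σ j))
      = ((List.finRange n).drop ((i0 : ℕ) + 2)).map (fun j => t (f j) (σ j)) := by
    apply map_drop_congr
    intro j hj
    have h0 : j ≠ i0 := by intro h; rw [h] at hj; omega
    have h1 : j ≠ i1 := by intro h; rw [h] at hj; omega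
    simp [hsfix j h0 h1]
  have hg0 : (f ∘ ⇑s) i0 = f i1 := by simp [hs]
  have hg1 : (f ∘ ⇑s) i1 = f i0 := by simp [hs]
  rw [ht, hd, hg0, hg1, smul_comm (-q) ((-q) ^ funcLen ⇑σ)]
  congr 1
  set L := (((List.finRange n).take (i0 : ℕ)).map (fun j => t (f j) (σ j))).prod with hL
  set R := (((List.finRange n).drop ((i0 : ℕ) + 2)).map (fun j => t (f j) (σ j))).prod with hR
  set a := f i0
  set b := f i1
  set c := σ i0
  set d := σ i1
  -- key element identity
  have hX : t a c * t b d = (q - q⁻¹) • (t a d * t b c) + t b d * t a c :=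
    sub_eq_iff_eq_add.mp (hmix a b c d hf hσ)
  have hc' : t a d * t b c = t b c * t a d := hcross a b c d hf hσ
  have keyW : t b c * t a d
      = q • (t b d * t a c) + ((-q) • (t a c * t b d) + (q * q) • (t a d * t b c)) := by
    rw [← hc', hX]
    exact key_module q (t b d * t a c) (t a d * t b c) hq1
  have hP : L * ((t b c * t a d) * R)
      = q • (L * ((t b d * t a c) * R))
        + ((-q) • (L * ((t a c * t b d) * R)) + (q * q) • (L * ((t a d * t b c) * R))) := by
    rw [keyW]
    simp only [add_mul, smul_mul_assoc, mul_add, mul_smul_comm]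
  exact key_lift q _ _ _ _ hP

lemma Dq_not_injective (q : RatFunc k) (hq1 : q * q⁻¹ = 1) (t : Fin n → Fin n → A)
    (hrow : ∀ i j l : Fin n, j < l → t i j * t i l = q • (t i l * t i j))
    (hcross : ∀ i j l m : Fin n, i < j → l < m → t i m * t j l = t j l * t i m)
    (hmix : ∀ i j l m : Fin n, i < j → l < m →
      t i l * t j m - t j m * t i l = (q - q⁻¹) • (t i m * t j l)) :
    ∀ (N : ℕ) (f : Fin n → Fin n), funcLen f = N → ¬Function.Injective f → Dq q t f = 0 := by
  intro N
  induction N using Nat.strong_induction_on with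
  | _ N ih =>
    intro f hN hfinj
    by_cases heq : ∃ (i : ℕ) (hi : i + 1 < n), f ⟨i, by omega⟩ = f ⟨i + 1, hi⟩
    · obtain ⟨i, hi, hfe⟩ := heq
      exact Dq_adjEqual ⟨i, by omega⟩ ⟨i + 1, hi⟩ rfl q t hrow f hfe
    · by_cases hdesc : ∃ (i : ℕ) (hi : i + 1 < n), f ⟨i + 1, hi⟩ < f ⟨i, by omega⟩
      · obtain ⟨i, hi, hlt⟩ := hdesc
        set i0 : Fin n := ⟨i, by omega⟩ with hi0
        set i1 : Fin n := ⟨i + 1, hi⟩ with hi1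
        have h01 : (i0 : ℕ) + 1 = (i1 : ℕ) := rfl
        set s := Equiv.swap i0 i1 with hs
        set g := f ∘ ⇑s with hg
        have hgs : g ∘ ⇑s = f := by
          funext j; simp [hg, hs, Equiv.swap_apply_self]
        have hg01 : g i0 < g i1 := by
          simpa [hg, hs, Equiv.swap_apply_left, Equiv.swap_apply_right] using hlt
        have hlen : funcLen f = funcLen g + 1 := by
          rw [← hgs, funcLen_comp_swap i0 i1 h01 g hg01]
        have hginj : ¬Function.Injective g := by
          intro h
          exact hfinj (hgs ▸ h.comp (Equiv.injective s))
        have hz := ih (funcLen g) (by omega) g rfl hginj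
        rw [← hgs, Dq_swap i0 i1 h01 q hq1 t hcross hmix g hg01, hz, smul_zero]
      · exfalso
        apply hfinj
        push_neg at heq hdesc
        have hsm : StrictMono f := by
          apply strictMono_of_adj
          intro i hi
          exact lt_of_le_of_ne (hdesc i hi) (heq i hi)
        exact hsm.injective

lemma Dq_perm (q : RatFunc k) (hq1 : q * q⁻¹ = 1) (t : Fin n → Fin n → A)
    (hcross : ∀ i j l m : Fin n, i < j → l < m → t i m * t j l = t j l * t i m)
    (hmix : ∀ i j l m : Fin n, i < j → l < m →
      t i l * t j m - t j m * t i l = (q - q⁻¹) • (t i m * t j l)) :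
    ∀ (N : ℕ) (τ : Equiv.Perm (Fin n)), permLength τ = N →
      Dq q t ⇑τ = ((-q) ^ N) • Dq q t id := by
  intro N
  induction N using Nat.strong_induction_on with
  | _ N ih =>
    intro τ hN
    by_cases hdesc : ∃ (i : ℕ) (hi : i + 1 < n), τ ⟨i + 1, hi⟩ < τ ⟨i, by omega⟩
    · obtain ⟨i, hi, hlt⟩ := hdesc
      set i0 : Fin n := ⟨i, by omega⟩ with hi0
      set i1 : Fin n := ⟨i + 1, hi⟩ with hi1
      have h01 : (i0 : ℕ) + 1 = (i1 : ℕ) := rfl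
      set s := Equiv.swap i0 i1 with hs
      set g := τ * s with hg
      have hgτ : ⇑g ∘ ⇑s = ⇑τ := by
        funext j; simp [hg, hs, Equiv.Perm.mul_apply, Equiv.swap_apply_self]
      have hg01 : g i0 < g i1 := by
        simpa [hg, hs, Equiv.Perm.mul_apply, Equiv.swap_apply_left,
          Equiv.swap_apply_right] using hlt
      have hlen : permLength τ = permLength g + 1 := by
        rw [permLength_eq_funcLen, permLength_eq_funcLen, ← hgτ,
          funcLen_comp_swap i0 i1 h01 ⇑g hg01]
      obtain ⟨m, hm⟩ : ∃ m, N = m + 1 := ⟨permLength g, by omega⟩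
      have hgm : permLength g = m := by omega
      have hrec := ih m (by omega) g hgm
      calc Dq q t ⇑τ = Dq q t (⇑g ∘ ⇑s) := by rw [hgτ]
        _ = (-q) • Dq q t ⇑g := Dq_swap i0 i1 h01 q hq1 t hcross hmix ⇑g hg01
        _ = (-q) • (((-q) ^ m) • Dq q t id) := by rw [hrec]
        _ = ((-q) ^ N) • Dq q t id := by rw [smul_smul, hm, pow_succ']
    · push_neg at hdesc
      have hsm : StrictMono ⇑τ := by
        apply strictMono_of_adj
        intro i hi
        have hne : τ (⟨i, by omega⟩ : Fin n) ≠ τ ⟨i + 1, hi⟩ := by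
          intro h
          have := τ.injective h
          simp [Fin.ext_iff] at this
        exact lt_of_le_of_ne (hdesc i hi) hne
      have hid : ⇑τ = id := by
        apply (StrictMono.range_inj hsm strictMono_id).mp
        rw [Equiv.range_eq_univ]
        simp
      have hN0 : N = 0 := by
        rw [← hN, permLength_eq_funcLen, funcLen]
        rw [Finset.filter_false_of_mem, Finset.card_empty]
        intro p _
        rintro ⟨h1, h2⟩
        exact absurd (hsm h1) (not_lt.mpr (le_of_lt h2))
      rw [hid, hN0, pow_zero, one_smul]

end alg


lemma prod_sum_fn {B : Type*} [Semiring B] {κ : Type*} [Fintype κ] [DecidableEq κ] :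
    ∀ (m : ℕ) (g : Fin m → κ → B),
      ((List.finRange m).map (fun j => ∑ l : κ, g j l)).prod
        = ∑ f : Fin m → κ, ((List.finRange m).map (fun j => g j (f j))).prod := by
  intro m
  induction m with
  | zero =>
    intro g
    simp
  | succ m ih =>
    intro g
    have hR : ∀ P : (Fin (m + 1) → κ) → B,
        ∑ f : Fin (m + 1) → κ, P f = ∑ l : κ, ∑ f : Fin m → κ, P (Fin.cons l f) := by
      intro P
      rw [← (Fin.consEquiv (fun _ : Fin (m + 1) => κ)).sum_comp, Fintype.sum_prod_type]
      rfl
    rw [hR]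
    rw [List.finRange_succ]
    simp only [List.map_cons, List.prod_cons, List.map_map]
    rw [show ((fun j => ∑ l : κ, g j l) ∘ Fin.succ) = (fun j : Fin m => ∑ l : κ, g j.succ l)
      from rfl]
    rw [ih (fun j l => g j.succ l), Finset.sum_mul_sum]
    apply Finset.sum_congr rfl
    intro l _
    apply Finset.sum_congr rfl
    intro f _
    congr 1

lemma prod_tmul {R : Type*} [CommSemiring R] {A : Type*} [Semiring A] [Algebra R A] :
    ∀ (m : ℕ) (a b : Fin m → A),
      ((List.finRange m).map (fun j => a j ⊗ₜ[R] b j)).prod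
        = ((List.finRange m).map a).prod ⊗ₜ[R] ((List.finRange m).map b).prod := by
  intro m
  induction m with
  | zero => simp [Algebra.TensorProduct.one_def]
  | succ m ih =>
    intro a b
    rw [List.finRange_succ]
    simp only [List.map_cons, List.prod_cons, List.map_map]
    rw [show ((fun j => a j ⊗ₜ[R] b j) ∘ Fin.succ) = (fun j : Fin m => (a j.succ) ⊗ₜ[R] (b j.succ))
      from rfl]
    rw [ih (fun j => a j.succ) (fun j => b j.succ)]
    rw [Algebra.TensorProduct.tmul_mul_tmul]
    rfl

/-- for a q-matrix in a bialgebra whose entries satisfy the matrix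
comultiplication and counit rules, the quantum determinant is group-like. -/
theorem qDet_grouplike {k : Type*} [Field k] [CharZero k]
    {A : Type*} [Ring A] [Bialgebra (RatFunc k) A] {n : ℕ}
    (q : RatFunc k) (hq : q = RatFunc.X) (t : Fin n → Fin n → A)
    (hrow : ∀ i j l : Fin n, j < l → t i j * t i l = q • (t i l * t i j))
    (hcol : ∀ i h l : Fin n, i < h → t i l * t h l = q • (t h l * t i l))
    (hcross : ∀ i j l m : Fin n, i < j → l < m → t i m * t j l = t j l * t i m)
    (hmix : ∀ i j l m : Fin n, i < j → l < m →
      t i l * t j m - t j m * t i l = (q - q⁻¹) • (t i m * t j l))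
    (hcomul : ∀ i j : Fin n,
      Coalgebra.comul (R := RatFunc k) (t i j) = ∑ l : Fin n, t i l ⊗ₜ[RatFunc k] t l j)
    (hcounit : ∀ i j : Fin n,
      Coalgebra.counit (R := RatFunc k) (t i j) = if i = j then (1 : RatFunc k) else 0) :
    Coalgebra.comul (R := RatFunc k) (qDet q t) = qDet q t ⊗ₜ[RatFunc k] qDet q t ∧
      Coalgebra.counit (R := RatFunc k) (qDet q t) = (1 : RatFunc k) := by
  classical
  have hq1 : q * q⁻¹ = 1 := by rw [hq]; exact mul_inv_cancel₀ RatFunc.X_ne_zero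
  constructor
  · -- comultiplication
    have hterm : ∀ σ : Equiv.Perm (Fin n),
        Coalgebra.comul (R := RatFunc k)
            ((List.map (fun i => t i (σ i)) (List.finRange n)).prod)
          = ∑ f : Fin n → Fin n,
              ((List.map (fun j => t j (f j)) (List.finRange n)).prod ⊗ₜ[RatFunc k]
                (List.map (fun j => t (f j) (σ j)) (List.finRange n)).prod) := by
      intro σ
      rw [← Bialgebra.comulAlgHom_apply (RatFunc k) A, map_list_prod, List.map_map]
      have h1 : (⇑(Bialgebra.comulAlgHom (RatFunc k) A) ∘ fun i => t i (σ i))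
          = fun i => ∑ l : Fin n, t i l ⊗ₜ[RatFunc k] t l (σ i) := by
        funext i
        simp only [Function.comp_apply, Bialgebra.comulAlgHom_apply, hcomul]
      rw [h1, prod_sum_fn n (fun i l => t i l ⊗ₜ[RatFunc k] t l (σ i))]
      apply Finset.sum_congr rfl
      intro f _
      exact prod_tmul n (fun j => t j (f j)) (fun j => t (f j) (σ j))
    rw [qDet, map_sum]
    have h2 : ∀ σ : Equiv.Perm (Fin n),
        Coalgebra.comul (R := RatFunc k)
            (((-q) ^ permLength σ) • (List.map (fun i => t i (σ i)) (List.finRange n)).prod)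
          = ∑ f : Fin n → Fin n,
              ((List.map (fun j => t j (f j)) (List.finRange n)).prod ⊗ₜ[RatFunc k]
                (((-q) ^ permLength σ) •
                  (List.map (fun j => t (f j) (σ j)) (List.finRange n)).prod)) := by
      intro σ
      rw [map_smul, hterm σ, Finset.smul_sum]
      apply Finset.sum_congr rfl
      intro f _
      rw [TensorProduct.tmul_smul]
    rw [Finset.sum_congr rfl (fun σ _ => h2 σ), Finset.sum_comm]
    have h3 : ∀ f : Fin n → Fin n,
        (∑ σ : Equiv.Perm (Fin n),
          ((List.map (fun j => t j (f j)) (List.finRange n)).prod ⊗ₜ[RatFunc k]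
            (((-q) ^ permLength σ) •
              (List.map (fun j => t (f j) (σ j)) (List.finRange n)).prod)))
        = (List.map (fun j => t j (f j)) (List.finRange n)).prod ⊗ₜ[RatFunc k] Dq q t f := by
      intro f
      rw [Dq, TensorProduct.tmul_sum]
      rfl
    rw [Finset.sum_congr rfl (fun f _ => h3 f)]
    have h4 : ∀ f ∈ (Finset.univ : Finset (Fin n → Fin n)),
        ((List.map (fun j => t j (f j)) (List.finRange n)).prod ⊗ₜ[RatFunc k] Dq q t f) ≠ 0
          → Function.Injective f := by
      intro f _ hne
      by_contra hinj
      apply hne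
      rw [Dq_not_injective q hq1 t hrow hcross hmix (funcLen f) f rfl hinj,
        TensorProduct.tmul_zero]
    rw [← Finset.sum_filter_of_ne h4]
    have h5 : ∑ f ∈ Finset.filter (fun f : Fin n → Fin n => Function.Injective f) Finset.univ,
        ((List.map (fun j => t j (f j)) (List.finRange n)).prod ⊗ₜ[RatFunc k] Dq q t f)
      = ∑ τ : Equiv.Perm (Fin n),
        ((List.map (fun j => t j (τ j)) (List.finRange n)).prod ⊗ₜ[RatFunc k] Dq q t ⇑τ) := by
      apply Finset.sum_bij (i := fun f hf => Equiv.ofBijective f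
        (Finite.injective_iff_bijective.mp (by simpa using hf)))
      · intro f hf
        exact Finset.mem_univ _
      · intro f hf g hg hij
        funext j
        have h1 : f j = Equiv.ofBijective f
            (Finite.injective_iff_bijective.mp (by simpa using hf)) j := rfl
        have h2 : g j = Equiv.ofBijective g
            (Finite.injective_iff_bijective.mp (by simpa using hg)) j := rfl
        rw [h1, h2, hij]
      · intro τ _
        refine ⟨⇑τ, by simp [τ.injective], ?_⟩
        ext j
        rfl
      · intro f hf
        rfl
    rw [h5]
    have h6 : ∀ τ : Equiv.Perm (Fin n), Dq q t ⇑τ = ((-q) ^ permLength τ) • qDet q t := by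
      intro τ
      rw [Dq_perm q hq1 t hcross hmix (permLength τ) τ rfl]
      rfl
    have h7 : ∀ τ : Equiv.Perm (Fin n),
        ((List.map (fun j => t j (τ j)) (List.finRange n)).prod ⊗ₜ[RatFunc k] Dq q t ⇑τ)
          = (((-q) ^ permLength τ) •
              (List.map (fun j => t j (τ j)) (List.finRange n)).prod) ⊗ₜ[RatFunc k]
                qDet q t := by
      intro τ
      rw [h6 τ, TensorProduct.tmul_smul, TensorProduct.smul_tmul']
    rw [Finset.sum_congr rfl (fun τ _ => h7 τ), ← TensorProduct.sum_tmul]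
    rfl
  · -- counit
    rw [qDet, map_sum]
    have hterm : ∀ σ : Equiv.Perm (Fin n),
        Coalgebra.counit (R := RatFunc k)
            (((-q) ^ permLength σ) • (List.map (fun i => t i (σ i)) (List.finRange n)).prod)
          = ((-q) ^ permLength σ) *
              (List.map (fun i : Fin n => if i = σ i then (1 : RatFunc k) else 0)
                (List.finRange n)).prod := by
      intro σ
      rw [map_smul, smul_eq_mul]
      congr 1
      rw [← Bialgebra.counitAlgHom_apply (RatFunc k) A, map_list_prod, List.map_map]
      congr 1
      apply List.map_congr_left
      intro i _
      simp [hcounit]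
    rw [Finset.sum_congr rfl (fun σ _ => hterm σ)]
    rw [Finset.sum_eq_single 1]
    · have hp1 : permLength (1 : Equiv.Perm (Fin n)) = 0 := by
        rw [permLength, Finset.filter_false_of_mem, Finset.card_empty]
        intro p _
        rintro ⟨hlt1, hlt2⟩
        simp only [Equiv.Perm.one_apply] at hlt2
        exact absurd hlt1 (not_lt.mpr (le_of_lt hlt2))
      rw [hp1, pow_zero, one_mul]
      simp
    · intro σ _ hσ
      obtain ⟨j, hj⟩ : ∃ j, σ j ≠ j := by
        by_contra hcon
        push_neg at hcon
        exact hσ (Equiv.ext fun j => hcon j)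
      have hz : (List.map (fun i : Fin n => if i = σ i then (1 : RatFunc k) else 0)
          (List.finRange n)).prod = 0 := by
        apply List.prod_eq_zero
        rw [List.mem_map]
        exact ⟨j, List.mem_finRange j, by simp [Ne.symm hj]⟩
      rw [hz, mul_zero]
    · intro h1
      exact absurd (Finset.mem_univ _) h1
end

section
/- In U_q^P(gl_n), define quantum root vectors E^±_{i,i+1} := E_i and recursively E^±_{i,j} := [E^±_{i,k}, E^±_{k,j}]_{q^{±1}} for i < k < j, where [x,y]_a := xy − a yx (this is independent of the choice of k). Then the involutive anti-automorphism Ψ (fixing E_i, F_i and inverting the G_j) satisfies Ψ(E^±_{i,j}) = (−q)^{∓(i−j+1)} E^∓_{i,j} for all i < j. -/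
noncomputable section

/-- Generators of `U_q^P(gl_n)`: `E_1,…,E_{n−1}`, `F_1,…,F_{n−1}`,
`G_1^{+1},…,G_n^{+1}`, `G_1^{−1},…,G_n^{−1}` (0-indexed). -/
inductive GlGen (n : ℕ) : Type
  | E : Fin (n - 1) → GlGen n
  | F : Fin (n - 1) → GlGen n
  | G : Fin n → GlGen n
  | Gi : Fin n → GlGen n

variable (K : Type) [Field K]

def fe (n : ℕ) (i : Fin (n - 1)) : FreeAlgebra K (GlGen n) := FreeAlgebra.ι K (GlGen.E i)
def ff (n : ℕ) (i : Fin (n - 1)) : FreeAlgebra K (GlGen n) := FreeAlgebra.ι K (GlGen.F i)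
def fg (n : ℕ) (i : Fin n) : FreeAlgebra K (GlGen n) := FreeAlgebra.ι K (GlGen.G i)
def fgi (n : ℕ) (i : Fin n) : FreeAlgebra K (GlGen n) := FreeAlgebra.ι K (GlGen.Gi i)

/-- The inclusion `Fin (n-1) → Fin n`, `i ↦ i` (the index `i` of `G_i`). -/
def idxlo {n : ℕ} (i : Fin (n - 1)) : Fin n := ⟨i.val, by have := i.isLt; omega⟩
/-- The inclusion `Fin (n-1) → Fin n`, `i ↦ i+1` (the index `i+1` of `G_{i+1}`). -/
def idxhi {n : ℕ} (i : Fin (n - 1)) : Fin n := ⟨i.val + 1, by have := i.isLt; omega⟩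

/-- The defining relations of `U_q^P(gl_n)` (Chevalley–Serre type presentation). -/
inductive GlRel (q : K) (n : ℕ) : FreeAlgebra K (GlGen n) → FreeAlgebra K (GlGen n) → Prop
  | ggi (i : Fin n) : GlRel q n (fg K n i * fgi K n i) 1
  | gig (i : Fin n) : GlRel q n (fgi K n i * fg K n i) 1
  | gg (i j : Fin n) : GlRel q n (fg K n i * fg K n j) (fg K n j * fg K n i)
  | ggi' (i j : Fin n) : GlRel q n (fg K n i * fgi K n j) (fgi K n j * fg K n i)
  | gigi (i j : Fin n) : GlRel q n (fgi K n i * fgi K n j) (fgi K n j * fgi K n i)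
  | gf (i : Fin n) (j : Fin (n - 1)) :
      GlRel q n (fg K n i * ff K n j)
        ((q ^ (((if i.val = j.val + 1 then 1 else 0) - (if i.val = j.val then 1 else 0)) : ℤ)) •
          (ff K n j * fg K n i))
  | ge (i : Fin n) (j : Fin (n - 1)) :
      GlRel q n (fg K n i * fe K n j)
        ((q ^ (((if i.val = j.val then 1 else 0) - (if i.val = j.val + 1 then 1 else 0)) : ℤ)) •
          (fe K n j * fg K n i))
  | ef (i j : Fin (n - 1)) :
      GlRel q n (fe K n i * ff K n j)
        (ff K n j * fe K n i +
          (if i = j then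
            (q - q⁻¹)⁻¹ • (fg K n (idxlo i) * fgi K n (idxhi i) -
              fgi K n (idxlo i) * fg K n (idxhi i))
          else 0))
  | ee (i j : Fin (n - 1)) (h : i.val + 1 < j.val ∨ j.val + 1 < i.val) :
      GlRel q n (fe K n i * fe K n j) (fe K n j * fe K n i)
  | ffcomm (i j : Fin (n - 1)) (h : i.val + 1 < j.val ∨ j.val + 1 < i.val) :
      GlRel q n (ff K n i * ff K n j) (ff K n j * ff K n i)
  | serreE (i j : Fin (n - 1)) (h : i.val + 1 = j.val ∨ j.val + 1 = i.val) :
      GlRel q n (fe K n i * fe K n i * fe K n j + fe K n j * (fe K n i * fe K n i))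
        ((q + q⁻¹) • (fe K n i * fe K n j * fe K n i))
  | serreF (i j : Fin (n - 1)) (h : i.val + 1 = j.val ∨ j.val + 1 = i.val) :
      GlRel q n (ff K n i * ff K n i * ff K n j + ff K n j * (ff K n i * ff K n i))
        ((q + q⁻¹) • (ff K n i * ff K n j * ff K n i))

/-- `U_q^P(gl_n)`, presented by Chevalley-type generators and relations. -/
def Uq (q : K) (n : ℕ) : Type := RingQuot (GlRel K q n)

instance (q : K) (n : ℕ) : Ring (Uq K q n) :=
  inferInstanceAs (Ring (RingQuot (GlRel K q n)))

instance (q : K) (n : ℕ) : Algebra K (Uq K q n) :=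
  inferInstanceAs (Algebra K (RingQuot (GlRel K q n)))

def uE (q : K) (n : ℕ) (i : Fin (n - 1)) : Uq K q n :=
  RingQuot.mkAlgHom K (GlRel K q n) (fe K n i)
def uF (q : K) (n : ℕ) (i : Fin (n - 1)) : Uq K q n :=
  RingQuot.mkAlgHom K (GlRel K q n) (ff K n i)
def uG (q : K) (n : ℕ) (i : Fin n) : Uq K q n :=
  RingQuot.mkAlgHom K (GlRel K q n) (fg K n i)
def uGi (q : K) (n : ℕ) (i : Fin n) : Uq K q n :=
  RingQuot.mkAlgHom K (GlRel K q n) (fgi K n i)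

/-- `E_i`, `F_i`, `G_i^{±1}` indexed by natural numbers (junk value `0` out of range). -/
def eN (q : K) (n : ℕ) (i : ℕ) : Uq K q n := if h : i < n - 1 then uE K q n ⟨i, h⟩ else 0
def fN (q : K) (n : ℕ) (i : ℕ) : Uq K q n := if h : i < n - 1 then uF K q n ⟨i, h⟩ else 0
def gN (q : K) (n : ℕ) (i : ℕ) : Uq K q n := if h : i < n then uG K q n ⟨i, h⟩ else 0
def giN (q : K) (n : ℕ) (i : ℕ) : Uq K q n := if h : i < n then uGi K q n ⟨i, h⟩ else 0

/-- The quantum root vectors `E^{(a)}_{i,j}` defined by `E_{i,i+1} := E_i` and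
`E_{i,j} = [E_{i,k}, E_{k,j}]_a = E_{i,k}E_{k,j} − a E_{k,j}E_{i,k}` (with `k = j−1`);
`a = q` gives `E^+`, `a = q⁻¹` gives `E^−`. -/
def Eroot (q : K) (n : ℕ) (a : K) (i : ℕ) : ℕ → Uq K q n
  | 0 => 0
  | j + 1 =>
      if j = i then eN K q n i
      else Eroot q n a i j * eN K q n j - a • (eN K q n j * Eroot q n a i j)

/-- Auxiliary recursion for `F^{(a)}_{j,i}`: `FrootAux q n a j d = F_{j, j−1−d}`. -/
def FrootAux (q : K) (n : ℕ) (a : K) (j : ℕ) : ℕ → Uq K q n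
  | 0 => fN K q n (j - 1)
  | d + 1 =>
      FrootAux q n a j d * fN K q n (j - 2 - d) -
        a • (fN K q n (j - 2 - d) * FrootAux q n a j d)

/-- The quantum root vectors `F^{(a)}_{j,i}` defined by `F_{i+1,i} := F_i` and
`F_{j,i} = [F_{j,k}, F_{k,i}]_a = F_{j,k}F_{k,i} − a F_{k,i}F_{j,k}` (with `k = i+1`);
`a = q⁻¹` gives `F^+`, `a = q` gives `F^−`. -/
def Froot (q : K) (n : ℕ) (a : K) (j i : ℕ) : Uq K q n := FrootAux K q n a j (j - i - 1)

lemma Eroot_base (q a : K) (n i : ℕ) :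
    Eroot K q n a i (i + 1) = eN K q n i := by
  rw [Eroot, if_pos rfl]

lemma Eroot_succ (q a : K) (n i j : ℕ) (h : j ≠ i) :
    Eroot K q n a i (j + 1) =
      Eroot K q n a i j * eN K q n j - a • (eN K q n j * Eroot K q n a i j) := by
  rw [Eroot, if_neg h]

/-- the involutive anti-automorphism `Ψ` of `U_q^P(gl_n)` (fixing the
`E_i`, `F_i` and inverting the `G_j`) satisfies
`Ψ(E^±_{i,j}) = (−q)^{∓(i−j+1)} E^∓_{i,j}` for all `i < j` (0-indexed, `j < n`). -/
theorem Psi_on_E_root_vectors (k : Type) [Field k] [CharZero k] (n : ℕ)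
    (Ψ : Uq (RatFunc k) RatFunc.X n ≃ₐ[RatFunc k] (Uq (RatFunc k) RatFunc.X n)ᵐᵒᵖ)
    (hE : ∀ i, Ψ (uE (RatFunc k) RatFunc.X n i) = MulOpposite.op (uE (RatFunc k) RatFunc.X n i))
    (hF : ∀ i, Ψ (uF (RatFunc k) RatFunc.X n i) = MulOpposite.op (uF (RatFunc k) RatFunc.X n i))
    (hG : ∀ i, Ψ (uG (RatFunc k) RatFunc.X n i) = MulOpposite.op (uGi (RatFunc k) RatFunc.X n i))
    (hGi : ∀ i, Ψ (uGi (RatFunc k) RatFunc.X n i) = MulOpposite.op (uG (RatFunc k) RatFunc.X n i))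
    (hinv : ∀ x, (Ψ ((Ψ x).unop)).unop = x) :
    ∀ i j : ℕ, i < j → j < n →
      Ψ (Eroot (RatFunc k) RatFunc.X n RatFunc.X i j) =
        MulOpposite.op ((((-RatFunc.X : RatFunc k) ^ (-(((i : ℤ) - (j : ℤ) + 1)))) •
          Eroot (RatFunc k) RatFunc.X n (RatFunc.X)⁻¹ i j)) ∧
      Ψ (Eroot (RatFunc k) RatFunc.X n (RatFunc.X)⁻¹ i j) =
        MulOpposite.op ((((-RatFunc.X : RatFunc k) ^ ((i : ℤ) - (j : ℤ) + 1)) •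
          Eroot (RatFunc k) RatFunc.X n RatFunc.X i j)) := by
  classical
  have hX : (RatFunc.X : RatFunc k) ≠ 0 := RatFunc.X_ne_zero
  have hEn : ∀ t : ℕ, t < n - 1 →
      Ψ (eN (RatFunc k) RatFunc.X n t) = MulOpposite.op (eN (RatFunc k) RatFunc.X n t) := by
    intro t ht
    simp [eN, dif_pos ht, hE]
  have aux : ∀ d i : ℕ, i + d + 1 < n →
      Ψ (Eroot (RatFunc k) RatFunc.X n RatFunc.X i (i + d + 1)) =
        MulOpposite.op ((((-RatFunc.X : RatFunc k) ^ d) •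
          Eroot (RatFunc k) RatFunc.X n (RatFunc.X)⁻¹ i (i + d + 1))) ∧
      Ψ (Eroot (RatFunc k) RatFunc.X n (RatFunc.X)⁻¹ i (i + d + 1)) =
        MulOpposite.op (((((-RatFunc.X : RatFunc k) ^ d)⁻¹) •
          Eroot (RatFunc k) RatFunc.X n RatFunc.X i (i + d + 1))) := by
    intro d
    induction d with
    | zero =>
      intro i hi
      have h1 : i < n - 1 := by omega
      simp only [Nat.add_zero, Eroot_base, pow_zero, inv_one, one_smul]
      exact ⟨hEn i h1, hEn i h1⟩
    | succ d ih =>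
      intro i hi
      have hne : i + d + 1 ≠ i := by omega
      have hE1 := hEn (i + d + 1) (by omega)
      obtain ⟨ih1, ih2⟩ := ih i (by omega)
      have hadd : i + (d + 1) + 1 = (i + d + 1) + 1 := by omega
      have hc : ((-RatFunc.X : RatFunc k) ^ d) ≠ 0 :=
        pow_ne_zero _ (neg_ne_zero.mpr hX)
      rw [hadd, Eroot_succ _ _ _ _ _ _ hne, Eroot_succ _ _ _ _ _ _ hne]
      constructor
      · rw [map_sub, map_mul, map_smul, map_mul, ih1, hE1]
        rw [← MulOpposite.op_mul, ← MulOpposite.op_mul, ← MulOpposite.op_smul,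
          ← MulOpposite.op_sub, MulOpposite.op_inj]
        simp only [mul_smul_comm, smul_mul_assoc, smul_sub, smul_smul]
        rw [show ((-RatFunc.X : RatFunc k))^(d+1) * RatFunc.X⁻¹ = -((-RatFunc.X)^d) from by
            rw [pow_succ, mul_assoc, neg_mul, mul_inv_cancel₀ hX, mul_neg_one],
          show ((-RatFunc.X : RatFunc k))^(d+1) = -(RatFunc.X * (-RatFunc.X)^d) from by ring,
          neg_smul, neg_smul, sub_neg_eq_add]
        abel
      · rw [map_sub, map_mul, map_smul, map_mul, ih2, hE1]
        rw [← MulOpposite.op_mul, ← MulOpposite.op_mul, ← MulOpposite.op_smul,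
          ← MulOpposite.op_sub, MulOpposite.op_inj]
        simp only [mul_smul_comm, smul_mul_assoc, smul_sub, smul_smul]
        rw [show (((-RatFunc.X : RatFunc k))^(d+1))⁻¹ * RatFunc.X = -(((-RatFunc.X)^d)⁻¹) from by
            rw [pow_succ, mul_inv, inv_neg, mul_assoc, neg_mul, inv_mul_cancel₀ hX, mul_neg_one],
          show (((-RatFunc.X : RatFunc k))^(d+1))⁻¹ = -(RatFunc.X⁻¹ * ((-RatFunc.X)^d)⁻¹) from by
            rw [pow_succ, mul_inv, inv_neg]; ring,
          neg_smul, neg_smul, sub_neg_eq_add]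
        abel
  intro i j hij hjn
  have hd : j = i + (j - i - 1) + 1 := by omega
  obtain ⟨aux1, aux2⟩ := aux (j - i - 1) i (by omega)
  have he1 : (-(((i : ℤ) - (j : ℤ) + 1))) = ((j - i - 1 : ℕ) : ℤ) := by
    have : (i : ℤ) < j := by exact_mod_cast hij
    push_cast [Nat.cast_sub (by omega : 1 ≤ j - i), Nat.cast_sub (le_of_lt hij)]
    ring
  have he2 : (((i : ℤ) - (j : ℤ) + 1)) = -((j - i - 1 : ℕ) : ℤ) := by omega
  rw [he1, he2, zpow_neg, zpow_natCast]
  rw [← hd] at aux1 aux2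
  exact ⟨aux1, aux2⟩

end
end

section
/- In U_q^P(gl_n), define F^±_{i+1,i} := F_i and F^±_{j,i} := [F^±_{j,k}, F^±_{k,i}]_{q^{∓1}} for j > k > i. Then the involutive anti-automorphism Ψ (fixing E_i, F_i and inverting the G_j) satisfies Ψ(F^±_{j,i}) = (−q)^{±(i−j+1)} F^∓_{j,i} for all i < j. -/
noncomputable section

variable (K : Type) [Field K]

/-- the involutive anti-automorphism `Ψ` of `U_q^P(gl_n)` (fixing the
`E_i`, `F_i` and inverting the `G_j`) satisfies
`Ψ(F^±_{j,i}) = (−q)^{±(i−j+1)} F^∓_{j,i}` for all `i < j` (0-indexed, `j < n`).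
Here `F^+ = Froot` with twist `q⁻¹` and `F^- = Froot` with twist `q`. -/
theorem Psi_on_F_root_vectors (k : Type) [Field k] [CharZero k] (n : ℕ)
    (Ψ : Uq (RatFunc k) RatFunc.X n ≃ₐ[RatFunc k] (Uq (RatFunc k) RatFunc.X n)ᵐᵒᵖ)
    (hE : ∀ i, Ψ (uE (RatFunc k) RatFunc.X n i) = MulOpposite.op (uE (RatFunc k) RatFunc.X n i))
    (hF : ∀ i, Ψ (uF (RatFunc k) RatFunc.X n i) = MulOpposite.op (uF (RatFunc k) RatFunc.X n i))
    (hG : ∀ i, Ψ (uG (RatFunc k) RatFunc.X n i) = MulOpposite.op (uGi (RatFunc k) RatFunc.X n i))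
    (hGi : ∀ i, Ψ (uGi (RatFunc k) RatFunc.X n i) = MulOpposite.op (uG (RatFunc k) RatFunc.X n i))
    (hinv : ∀ x, (Ψ ((Ψ x).unop)).unop = x) :
    ∀ i j : ℕ, i < j → j < n →
      Ψ (Froot (RatFunc k) RatFunc.X n (RatFunc.X)⁻¹ j i) =
        MulOpposite.op ((((-RatFunc.X : RatFunc k) ^ ((i : ℤ) - (j : ℤ) + 1)) •
          Froot (RatFunc k) RatFunc.X n RatFunc.X j i)) ∧
      Ψ (Froot (RatFunc k) RatFunc.X n RatFunc.X j i) =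
        MulOpposite.op ((((-RatFunc.X : RatFunc k) ^ (-((i : ℤ) - (j : ℤ) + 1))) •
          Froot (RatFunc k) RatFunc.X n (RatFunc.X)⁻¹ j i)) := by
  have X0 : (RatFunc.X : RatFunc k) ≠ 0 := RatFunc.X_ne_zero
  have nX0 : (-RatFunc.X : RatFunc k) ≠ 0 := neg_ne_zero.mpr X0
  have hfN : ∀ m : ℕ, Ψ (fN (RatFunc k) RatFunc.X n m) =
      MulOpposite.op (fN (RatFunc k) RatFunc.X n m) := by
    intro m
    unfold fN
    split
    · exact hF _
    · simp
  suffices H : ∀ d i j : ℕ, i < j → j < n → j - i - 1 = d →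
      (Ψ (Froot (RatFunc k) RatFunc.X n (RatFunc.X)⁻¹ j i) =
        MulOpposite.op ((((-RatFunc.X : RatFunc k) ^ ((i : ℤ) - (j : ℤ) + 1)) •
          Froot (RatFunc k) RatFunc.X n RatFunc.X j i)) ∧
      Ψ (Froot (RatFunc k) RatFunc.X n RatFunc.X j i) =
        MulOpposite.op ((((-RatFunc.X : RatFunc k) ^ (-((i : ℤ) - (j : ℤ) + 1))) •
          Froot (RatFunc k) RatFunc.X n (RatFunc.X)⁻¹ j i))) by
    intro i j hij hjn
    exact H (j - i - 1) i j hij hjn rfl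
  intro d
  induction d with
  | zero =>
    intro i j hij hjn hd
    obtain rfl : j = i + 1 := by omega
    have hFr : ∀ a : RatFunc k, Froot (RatFunc k) RatFunc.X n a (i + 1) i =
        fN (RatFunc k) RatFunc.X n i := by
      intro a
      unfold Froot
      rw [show i + 1 - i - 1 = 0 from by omega]
      simp only [FrootAux]
      rw [Nat.add_sub_cancel]
    have he : ((i : ℤ) - ((i + 1 : ℕ) : ℤ) + 1) = 0 := by push_cast; ring
    rw [hFr, hFr, he]
    simp only [neg_zero, zpow_zero, one_smul]
    exact ⟨hfN i, hfN i⟩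
  | succ d ih =>
    intro i j hij hjn hd
    have hij1 : i + 1 < j := by omega
    obtain ⟨IH1, IH2⟩ := ih (i + 1) j hij1 hjn (by omega)
    have hFr : ∀ a : RatFunc k, Froot (RatFunc k) RatFunc.X n a j i =
        Froot (RatFunc k) RatFunc.X n a j (i + 1) * fN (RatFunc k) RatFunc.X n i -
          a • (fN (RatFunc k) RatFunc.X n i * Froot (RatFunc k) RatFunc.X n a j (i + 1)) := by
      intro a
      unfold Froot
      rw [hd, show j - (i + 1) - 1 = d from by omega]
      simp only [FrootAux]
      rw [show j - 2 - d = i from by omega]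
    have he : ((i + 1 : ℕ) : ℤ) - (j : ℤ) + 1 = ((i : ℤ) - (j : ℤ) + 1) + 1 := by
      push_cast; ring
    have key1 : ∀ (c : RatFunc k) (A B : Uq (RatFunc k) RatFunc.X n),
        (c * -RatFunc.X) • B - (RatFunc.X⁻¹ * (c * -RatFunc.X)) • A =
          c • A - (c * RatFunc.X) • B := by
      intro c A B
      have h : (RatFunc.X : RatFunc k)⁻¹ * (c * -RatFunc.X) = -c := by
        field_simp
      rw [h, mul_neg, neg_smul, neg_smul, sub_neg_eq_add]
      abel
    have key2 : ∀ (c : RatFunc k) (A B : Uq (RatFunc k) RatFunc.X n),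
        (c * (-RatFunc.X)⁻¹) • B - (RatFunc.X * (c * (-RatFunc.X)⁻¹)) • A =
          c • A - (c * RatFunc.X⁻¹) • B := by
      intro c A B
      have h : (RatFunc.X : RatFunc k) * (c * (-RatFunc.X)⁻¹) = -c := by
        rw [inv_neg]
        field_simp
      rw [h, inv_neg, mul_neg, neg_smul, neg_smul, sub_neg_eq_add]
      abel
    constructor
    · rw [hFr RatFunc.X⁻¹, hFr RatFunc.X, map_sub, map_smul, map_mul, IH1, hfN, map_mul, hfN, IH1,
        ← MulOpposite.op_mul, ← MulOpposite.op_mul, ← MulOpposite.op_smul,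
        ← MulOpposite.op_sub, MulOpposite.op_inj]
      rw [he, zpow_add_one₀ nX0]
      simp only [smul_smul, smul_sub, mul_smul_comm, smul_mul_assoc]
      exact key1 _ _ _
    · rw [hFr RatFunc.X⁻¹, hFr RatFunc.X, map_sub, map_smul, map_mul, IH2, hfN, map_mul, hfN, IH2,
        ← MulOpposite.op_mul, ← MulOpposite.op_mul, ← MulOpposite.op_smul,
        ← MulOpposite.op_sub, MulOpposite.op_inj]
      rw [show -(((i + 1 : ℕ) : ℤ) - (j : ℤ) + 1) =
        (-((i : ℤ) - (j : ℤ) + 1)) + (-1) from by push_cast; ring]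
      rw [zpow_add₀ nX0, zpow_neg_one]
      simp only [smul_smul, smul_sub, mul_smul_comm, smul_mul_assoc]
      exact key2 _ _ _

end
end

section
/- In U_q^P(gl_n), let β_{ij} (i ≤ j) be defined by β_{ii} = G_i, β_{i,i+1} = −(q−q^{−1})E_iG_{i+1}, and the recursion β_{ij} = (q−q^{−1})^{−1}(β_{ik}β_{kj} − β_{kj}β_{ik})β_{kk}^{−1} for i < k < j. Then β_{ij} = (−q)^{j−i} G_j (q − q^{−1}) E^−_{i,j} for all i < j, where E^−_{i,j} are the quantum root vectors built with [x,y]_{q^{−1}} brackets: E^−_{i,i+1} = E_i, E^−_{i,j} = E^−_{i,k}E^−_{k,j} − q^{−1}E^−_{k,j}E^−_{i,k}. -/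
noncomputable section

variable (K : Type) [Field K]

/-- The elements `β_{ij}` (`i ≤ j`) of `U_q^P(gl_n)`: `β_{ii} = G_i`,
`β_{i,i+1} = −(q−q⁻¹) E_i G_{i+1}`, and for `j > i+1` the recursion
`β_{ij} = (q−q⁻¹)⁻¹ (β_{ik}β_{kj} − β_{kj}β_{ik}) β_{kk}⁻¹` with `k = j−1`. -/
def betaEnt (q : K) (n : ℕ) (i : ℕ) : ℕ → Uq K q n
  | 0 => if i = 0 then gN K q n 0 else 0
  | j + 1 =>
      if i = j + 1 then gN K q n i
      else if i = j then -(q - q⁻¹) • (eN K q n i * gN K q n (i + 1))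
      else
        (q - q⁻¹)⁻¹ •
          ((betaEnt q n i j * (-(q - q⁻¹) • (eN K q n j * gN K q n (j + 1))) -
              (-(q - q⁻¹) • (eN K q n j * gN K q n (j + 1))) * betaEnt q n i j) *
            giN K q n j)


namespace BetaAux

variable {K : Type} [Field K] {q : K} {n : ℕ}

lemma rel_eq {x y : FreeAlgebra K (GlGen n)} (h : GlRel K q n x y) :
    RingQuot.mkAlgHom K (GlRel K q n) x = RingQuot.mkAlgHom K (GlRel K q n) y :=
  RingQuot.mkAlgHom_rel K h


lemma mk_mul (x y : FreeAlgebra K (GlGen n)) :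
    RingQuot.mkAlgHom K (GlRel K q n) (x * y) =
      (RingQuot.mkAlgHom K (GlRel K q n) x * RingQuot.mkAlgHom K (GlRel K q n) y : Uq K q n) :=
  map_mul _ _ _

lemma mk_smul (c : K) (x : FreeAlgebra K (GlGen n)) :
    RingQuot.mkAlgHom K (GlRel K q n) (c • x) =
      (c • RingQuot.mkAlgHom K (GlRel K q n) x : Uq K q n) :=
  map_smul _ _ _

lemma mk_one : RingQuot.mkAlgHom K (GlRel K q n) 1 = (1 : Uq K q n) := map_one _

lemma gN_eN (a b : ℕ) (ha : a < n) (hb : b < n - 1) :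
    gN K q n a * eN K q n b =
      (q ^ (((if a = b then 1 else 0) - (if a = b + 1 then 1 else 0)) : ℤ)) •
        (eN K q n b * gN K q n a) := by
  simp only [gN, eN, dif_pos ha, dif_pos hb]
  simp only [uG, uE]
  erw [← mk_mul, rel_eq (GlRel.ge ⟨a, ha⟩ ⟨b, hb⟩), mk_smul, mk_mul]
  rfl

lemma gE_self (b : ℕ) (hb : b < n - 1) :
    gN K q n b * eN K q n b = q • (eN K q n b * gN K q n b) := by
  have := gN_eN (q := q) b b (by omega) hb
  simpa using this

lemma gE_succ (b : ℕ) (hb : b < n - 1) :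
    gN K q n (b + 1) * eN K q n b = q⁻¹ • (eN K q n b * gN K q n (b + 1)) := by
  have := gN_eN (q := q) (b + 1) b (by omega) hb
  simp only [if_pos rfl, if_neg (by omega : ¬ b + 1 = b)] at this
  rw [this]
  norm_num

lemma gE_comm (a b : ℕ) (ha : a < n) (h1 : a ≠ b) (h2 : a ≠ b + 1) :
    gN K q n a * eN K q n b = eN K q n b * gN K q n a := by
  by_cases hb : b < n - 1
  · have := gN_eN (q := q) a b ha hb
    simp only [if_neg h1, if_neg h2] at this
    simpa using this
  · simp [eN, dif_neg hb]

lemma gg_comm (a b : ℕ) (ha : a < n) (hb : b < n) :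
    gN K q n a * gN K q n b = gN K q n b * gN K q n a := by
  simp only [gN, dif_pos ha, dif_pos hb]
  simp only [uG]
  erw [← mk_mul, rel_eq (GlRel.gg ⟨a, ha⟩ ⟨b, hb⟩), mk_mul]
  rfl

lemma ggi_one (a : ℕ) (ha : a < n) : gN K q n a * giN K q n a = 1 := by
  simp only [gN, giN, dif_pos ha]
  simp only [uG, uGi]
  erw [← mk_mul, rel_eq (GlRel.ggi ⟨a, ha⟩), mk_one]

lemma ggi_comm (a b : ℕ) (ha : a < n) (hb : b < n) :
    gN K q n a * giN K q n b = giN K q n b * gN K q n a := by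
  simp only [gN, giN, dif_pos ha, dif_pos hb]
  simp only [uG, uGi]
  erw [← mk_mul, rel_eq (GlRel.ggi' ⟨a, ha⟩ ⟨b, hb⟩), mk_mul]
  rfl

/-- `G_m` commutes with `E_{i,j}` when `m < i` or `m > j`. -/
lemma g_Eroot_comm (b : K) (i m : ℕ) (hm : m < n) :
    ∀ j, i < j → (m < i ∨ j < m) →
      gN K q n m * Eroot K q n b i j = Eroot K q n b i j * gN K q n m := by
  intro j
  induction j with
  | zero => omega
  | succ p ih =>
    intro hij hside
    simp only [Eroot]
    by_cases hpi : p = i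
    · subst hpi
      rw [if_pos rfl]
      exact gE_comm m p hm (by omega) (by omega)
    · rw [if_neg hpi]
      have hip : i < p := by omega
      have hA := ih hip (by omega)
      have he : gN K q n m * eN K q n p = eN K q n p * gN K q n m :=
        gE_comm m p hm (by omega) (by omega)
      have key1 : gN K q n m * (Eroot K q n b i p * eN K q n p) =
          Eroot K q n b i p * eN K q n p * gN K q n m := by
        rw [← mul_assoc, hA, mul_assoc, he, ← mul_assoc]
      have key2 : gN K q n m * (eN K q n p * Eroot K q n b i p) =
          eN K q n p * Eroot K q n b i p * gN K q n m := by
        rw [← mul_assoc, he, mul_assoc, hA, ← mul_assoc]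
      rw [mul_sub, sub_mul, mul_smul_comm, smul_mul_assoc, ← mul_assoc, hA, mul_assoc, he,
        ← mul_assoc, key2]

/-- `G_j E_{i,j} = q⁻¹ E_{i,j} G_j`. -/
lemma g_Eroot_self (b : K) (i j : ℕ) (hij : i < j) (hj : j < n) :
    gN K q n j * Eroot K q n b i j = q⁻¹ • (Eroot K q n b i j * gN K q n j) := by
  obtain ⟨p, rfl⟩ : ∃ p, j = p + 1 := ⟨j - 1, by omega⟩
  simp only [Eroot]
  by_cases hpi : p = i
  · subst hpi
    rw [if_pos rfl]
    exact gE_succ p (by omega)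
  · rw [if_neg hpi]
    have hip : i < p := by omega
    have hA : gN K q n (p + 1) * Eroot K q n b i p = Eroot K q n b i p * gN K q n (p + 1) :=
      g_Eroot_comm b i (p + 1) hj p hip (by omega)
    have he := gE_succ (q := q) (n := n) p (by omega)
    have hc1 : gN K q n (p + 1) * (Eroot K q n b i p * eN K q n p) =
        q⁻¹ • (Eroot K q n b i p * eN K q n p * gN K q n (p + 1)) := by
      rw [← mul_assoc, hA, mul_assoc, he, mul_smul_comm, ← mul_assoc]
    have hc2 : gN K q n (p + 1) * (eN K q n p * Eroot K q n b i p) =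
        q⁻¹ • (eN K q n p * Eroot K q n b i p * gN K q n (p + 1)) := by
      rw [← mul_assoc, he, smul_mul_assoc, mul_assoc, hA, ← mul_assoc]
    rw [mul_sub, mul_smul_comm, hc1, hc2, smul_comm b, ← smul_sub, sub_mul, smul_mul_assoc]


set_option maxHeartbeats 1600000 in
theorem main (hq0 : q ≠ 0) (hl : q - q⁻¹ ≠ 0) :
    ∀ j i : ℕ, i < j → j < n →
      betaEnt K q n i j =
        ((-q) ^ (j - i)) • (gN K q n j * ((q - q⁻¹) • Eroot K q n q⁻¹ i j)) := by
  intro j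
  induction j with
  | zero => intro i h1 _; exact absurd h1 (Nat.not_lt_zero i)
  | succ p ih =>
    intro i hij hjn
    rcases Nat.lt_succ_iff_lt_or_eq.mp hij with hip | hip
    · -- step case : i < p
      have hpi : ¬ p = i := by omega
      simp only [betaEnt, Eroot, if_neg (show ¬ i = p + 1 by omega),
        if_neg (show ¬ i = p by omega), if_neg hpi]
      rw [ih i hip (by omega)]
      simp only [smul_mul_assoc, mul_smul_comm, smul_smul, smul_sub, sub_mul, mul_sub, neg_smul,
        smul_neg, neg_mul, mul_neg, neg_neg, neg_sub, mul_assoc]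
      set g := gN K q n p with hg
      set g' := gN K q n (p + 1) with hg'
      set e := eN K q n p with he0
      set A := Eroot K q n q⁻¹ i p with hA0
      set gi := giN K q n p with hgi0
      have hpn : p < n := by omega
      have hpn1 : p < n - 1 := by omega
      have h1 : g * A = q⁻¹ • (A * g) := g_Eroot_self q⁻¹ i p hip hpn
      have h2 : g * e = q • (e * g) := gE_self p hpn1
      have h3 : g' * e = q⁻¹ • (e * g') := gE_succ p hpn1
      have h4 : g' * A = A * g' := g_Eroot_comm q⁻¹ i (p + 1) hjn p hip (by omega)
      have h5 : g * gi = 1 := ggi_one p hpn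
      have h7 : g * g' = g' * g := gg_comm p (p + 1) hpn hjn
      have he' : e * g' = q • (g' * e) := by
        rw [h3, smul_smul, mul_inv_cancel₀ hq0, one_smul]
      have hT1 : g * (A * (e * (g' * gi))) = q • (g' * (A * e)) := by
        calc g * (A * (e * (g' * gi)))
            = (g * A) * (e * (g' * gi)) := (mul_assoc _ _ _).symm
          _ = (q⁻¹ • (A * g)) * (e * (g' * gi)) := by rw [h1]
          _ = q⁻¹ • (A * (g * (e * (g' * gi)))) := by rw [smul_mul_assoc, mul_assoc]
          _ = q⁻¹ • (A * ((g * e) * (g' * gi))) := by rw [← mul_assoc g]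
          _ = q⁻¹ • (A * ((q • (e * g)) * (g' * gi))) := by rw [h2]
          _ = (q⁻¹ * q) • (A * (e * (g * (g' * gi)))) := by
              rw [smul_mul_assoc, mul_smul_comm, smul_smul, mul_assoc]
          _ = A * (e * (g * (g' * gi))) := by rw [inv_mul_cancel₀ hq0, one_smul]
          _ = A * (e * g') := by rw [← mul_assoc g, h7, mul_assoc, h5, mul_one]
          _ = q • (A * (g' * e)) := by rw [he', mul_smul_comm]
          _ = q • (g' * (A * e)) := by rw [← mul_assoc, ← h4, mul_assoc]
      have hT2 : e * (g' * (g * (A * gi))) = g' * (e * A) := by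
        have hx : g * (A * gi) = q⁻¹ • A := by
          rw [← mul_assoc, h1, smul_mul_assoc, mul_assoc, h5, mul_one]
        have hy : g' * (e * A) = q⁻¹ • (e * A * g') := by
          rw [← mul_assoc, h3, smul_mul_assoc, mul_assoc, h4, ← mul_assoc]
        have hy' : e * A * g' = q • (g' * (e * A)) := by
          rw [hy, smul_smul, mul_inv_cancel₀ hq0, one_smul]
        calc e * (g' * (g * (A * gi)))
            = e * (g' * (q⁻¹ • A)) := by rw [hx]
          _ = q⁻¹ • (e * (g' * A)) := by rw [mul_smul_comm, mul_smul_comm]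
          _ = q⁻¹ • ((e * A) * g') := by rw [h4, ← mul_assoc]
          _ = q⁻¹ • (q • (g' * (e * A))) := by rw [hy']
          _ = g' * (e * A) := by rw [smul_smul, inv_mul_cancel₀ hq0, one_smul]
      rw [hT1, hT2]
      have hd : p + 1 - i = (p - i) + 1 := by omega
      rw [hd, pow_succ]
      have hq1 : q ^ 2 - 1 ≠ 0 := by
        have := mul_ne_zero hq0 hl
        intro h
        apply this
        rw [mul_sub, mul_inv_cancel₀ hq0, ← h]
        ring
      have hq2 : (-1 : K) + q ^ 2 ≠ 0 := fun h => hq1 (by linear_combination h)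
      have hq3 : -q ^ 2 + q ^ 4 ≠ 0 := by
        intro h
        exact hq1 (by
          have h4 : q ^ 2 * (q ^ 2 - 1) = 0 := by linear_combination h
          rcases mul_eq_zero.mp h4 with h5 | h5
          · exact absurd h5 (pow_ne_zero 2 hq0)
          · exact h5)
      have hq4 : q * q - 1 ≠ 0 := fun h => hq1 (by linear_combination h)
      match_scalars
      all_goals field_simp [hq2, hq3, hq4]
      all_goals ring
    · -- base case : i = p
      subst hip
      simp only [betaEnt, Eroot, if_neg (show ¬ i = i + 1 by omega), eq_self_iff_true, if_true]
      have hd : i + 1 - i = 1 := by omega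
      rw [hd, pow_one, mul_smul_comm, gE_succ i (by omega), smul_smul, smul_smul]
      congr 1
      field_simp

end BetaAux

/-- `β_{ij} = (−q)^{j−i} G_j (q−q⁻¹) E^−_{i,j}` for all `i < j`
(0-indexed, `j < n`), where `E^−_{i,j}` is the quantum root vector built with
`[x,y]_{q⁻¹}` brackets. -/
theorem beta_eq_neg_root_vector (k : Type) [Field k] [CharZero k] (n : ℕ) :
    ∀ i j : ℕ, i < j → j < n →
      betaEnt (RatFunc k) RatFunc.X n i j =
        ((-RatFunc.X : RatFunc k) ^ (j - i)) •
          (gN (RatFunc k) RatFunc.X n j *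
            ((RatFunc.X - (RatFunc.X)⁻¹ : RatFunc k) •
              Eroot (RatFunc k) RatFunc.X n (RatFunc.X)⁻¹ i j)) := by
  intro i j hij hjn
  have hX : (RatFunc.X : RatFunc k) - (RatFunc.X)⁻¹ ≠ 0 := by
    intro h
    have hx : (RatFunc.X : RatFunc k) = (RatFunc.X)⁻¹ := sub_eq_zero.mp h
    have h2 : (RatFunc.X : RatFunc k) * RatFunc.X = 1 := by
      nth_rewrite 2 [hx]; exact mul_inv_cancel₀ RatFunc.X_ne_zero
    have h3 : (algebraMap (Polynomial k) (RatFunc k)) (Polynomial.X * Polynomial.X) =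
        algebraMap (Polynomial k) (RatFunc k) 1 := by
      simpa [RatFunc.algebraMap_X] using h2
    have h4 := RatFunc.algebraMap_injective k h3
    rw [← sq] at h4
    have h5 := congrArg Polynomial.natDegree h4
    simp [Polynomial.natDegree_X_pow] at h5
  exact BetaAux.main RatFunc.X_ne_zero hX j i hij hjn

end
end
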